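/- arXiv:2301.03243 — 2 statements merged into one kernel-verified Lean document; each statement's English description precedes it below -/
import Mathlib

section
/- Let (X, ‖·‖) be an extended normed linear space. The closed unit ball B_{X*} = {f ∈ X* : ‖f‖_op ≤ 1} of the dual is weak* compact if and only if X = X_fin, i.e., ‖·‖ is an ordinary norm. -/
open scoped ENNReal Pointwise
open TopologicalSpace

section ElcsDefs

variable {X : Type*} [AddCommGroup X] [Module ℝ X]

/-- An extended seminorm: absolutely homogeneous (with `∞·0 = 0` conventions of `ℝ≥0∞`)
and subadditive map into `[0,∞]`. -/
def IsExtSeminorm (ρ : X → ℝ≥0∞) : Prop :=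
  (∀ (a : ℝ) (x : X), ρ (a • x) = ENNReal.ofReal |a| * ρ x) ∧
  (∀ x y : X, ρ (x + y) ≤ ρ x + ρ y)

/-- An extended norm is a definite extended seminorm. -/
def IsExtNorm (ρ : X → ℝ≥0∞) : Prop :=
  IsExtSeminorm ρ ∧ ∀ x : X, ρ x = 0 → x = 0

/-- The topology induced by a family of extended seminorms: generated by all balls. -/
def elcsTopology (P : Set (X → ℝ≥0∞)) : TopologicalSpace X :=
  TopologicalSpace.generateFrom
    {s | ∃ ρ ∈ P, ∃ c : X, ∃ ε : ℝ≥0∞, 0 < ε ∧ s = {x | ρ (x - c) < ε}}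

/-- `(X, t)` is an extended locally convex space with defining family `P`. -/
def IsELCS (t : TopologicalSpace X) (P : Set (X → ℝ≥0∞)) : Prop :=
  (∀ ρ ∈ P, IsExtSeminorm ρ) ∧ t = elcsTopology P

theorem IsExtSeminorm.map_zero {ρ : X → ℝ≥0∞} (h : IsExtSeminorm ρ) : ρ 0 = 0 := by
  have h0 := h.1 0 0
  simpa using h0

/-- The finiteness subspace `X_fin^ρ = {x : ρ x < ∞}` of an extended seminorm. -/
def finSubmodule {ρ : X → ℝ≥0∞} (h : IsExtSeminorm ρ) : Submodule ℝ X where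
  carrier := {x | ρ x < ⊤}
  add_mem' := fun {x y} hx hy =>
    lt_of_le_of_lt (h.2 x y) (ENNReal.add_lt_top.2 ⟨hx, hy⟩)
  zero_mem' := by simp [Set.mem_setOf_eq, h.map_zero]
  smul_mem' := fun a x hx => by
    simp only [Set.mem_setOf_eq, h.1 a x]
    exact ENNReal.mul_lt_top ENNReal.ofReal_lt_top hx

/-- The finite subspace `X_fin` of an elcs: points where every continuous extended
seminorm is finite. -/
def XfinSubmodule (t : TopologicalSpace X) : Submodule ℝ X where
  carrier := {x | ∀ ρ : X → ℝ≥0∞, IsExtSeminorm ρ → @Continuous X ℝ≥0∞ t _ ρ → ρ x < ⊤}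
  add_mem' := fun {x y} hx hy ρ hρ hc =>
    lt_of_le_of_lt (hρ.2 x y) (ENNReal.add_lt_top.2 ⟨hx ρ hρ hc, hy ρ hρ hc⟩)
  zero_mem' := by
    intro ρ hρ _
    rw [hρ.map_zero]
    exact ENNReal.zero_lt_top
  smul_mem' := fun a x hx ρ hρ hc => by
    have h1 := hρ.1 a x
    rw [h1]
    exact ENNReal.mul_lt_top ENNReal.ofReal_lt_top (hx ρ hρ hc)

/-- The continuous dual of `(X, t)` as a submodule of the linear dual. -/
noncomputable def dualSubmodule (t : TopologicalSpace X) : Submodule ℝ (X →ₗ[ℝ] ℝ) where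
  carrier := {f | @Continuous X ℝ t _ fun x => f x}
  add_mem' := by
    intro f g hf hg
    simp only [Set.mem_setOf_eq, LinearMap.add_apply] at *
    exact hf.add hg
  zero_mem' := by
    simp only [Set.mem_setOf_eq, LinearMap.zero_apply]
    exact @continuous_const X ℝ t _ 0
  smul_mem' := by
    intro c f hf
    simp only [Set.mem_setOf_eq, LinearMap.smul_apply, smul_eq_mul] at *
    exact (@continuous_const X ℝ t _ c).mul hf

/-- The weak topology of `(X, t)`: the initial topology induced by the continuous dual. -/
def weakTopology (t : TopologicalSpace X) : TopologicalSpace X :=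
  ⨅ f : ↥(dualSubmodule t), TopologicalSpace.induced (fun x => f.1 x) inferInstance

/-- The weak* topology on the dual of `(X, t)`: pointwise convergence on `X`. -/
def weakStarTopology (t : TopologicalSpace X) : TopologicalSpace ↥(dualSubmodule t) :=
  ⨅ x : X, TopologicalSpace.induced (fun f : ↥(dualSubmodule t) => f.1 x) inferInstance

/-- `tF` is the finest locally convex (vector) topology on `X` coarser than `t`. -/
def IsFlcTopology (t tF : TopologicalSpace X) : Prop :=
  t ≤ tF ∧ @IsTopologicalAddGroup X tF _ ∧ @ContinuousSMul ℝ X _ _ tF ∧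
    @LocallyConvexSpace ℝ X _ _ _ _ tF ∧
    ∀ t' : TopologicalSpace X, t ≤ t' → @IsTopologicalAddGroup X t' _ →
      @ContinuousSMul ℝ X _ _ t' → @LocallyConvexSpace ℝ X _ _ _ _ t' → tF ≤ t'

/-- A set `A` is bounded in an elcs: for every neighborhood `U` of `0` there are `r > 0`
and a finite `F ⊆ A` with `A ⊆ F + r • U`. -/
def ElcsBounded (t : TopologicalSpace X) (A : Set X) : Prop :=
  ∀ U ∈ @nhds X t 0, ∃ r : ℝ, 0 < r ∧ ∃ F : Set X, F.Finite ∧ F ⊆ A ∧ A ⊆ F + r • U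

/-- `0 ∈ Core U`: `U` absorbs every point of `X`. -/
def ZeroInCore (U : Set X) : Prop :=
  ∀ x : X, ∃ δ : ℝ, 0 < δ ∧ ∀ s : ℝ, 0 ≤ s → s ≤ δ → s • x ∈ U

/-- A family of linear functionals is equicontinuous on `(X, t)` if it is uniformly bounded
by `1` on some neighborhood of `0`. -/
def EquicontSet (t : TopologicalSpace X) (A : Set (X →ₗ[ℝ] ℝ)) : Prop :=
  ∃ U ∈ @nhds X t 0, ∀ f ∈ A, ∀ x ∈ U, |f x| ≤ 1

/-- The extended-seminorm-valued sup functional `ρ_A(x) = sup_{f ∈ A} |f x|`. -/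
noncomputable def dualSupFun (A : Set (X →ₗ[ℝ] ℝ)) : X → ℝ≥0∞ :=
  fun x => ⨆ f ∈ A, ENNReal.ofReal |f x|

/-- The topology on the dual of uniform convergence on members of a family `𝔅` of subsets
of `X`. -/
def ucTopology (t : TopologicalSpace X) (𝔅 : Set (Set X)) :
    TopologicalSpace ↥(dualSubmodule t) :=
  TopologicalSpace.generateFrom
    {s | ∃ B ∈ 𝔅, ∃ g : ↥(dualSubmodule t), ∃ ε : ℝ≥0∞, 0 < ε ∧
      s = {f | (⨆ x ∈ B, ENNReal.ofReal |f.1 x - g.1 x|) < ε}}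

/-- A vector topology is normable if it is induced by a single everywhere-finite
extended norm, i.e. by a norm. -/
def IsNormableTop {Y : Type*} [AddCommGroup Y] [Module ℝ Y] (t : TopologicalSpace Y) : Prop :=
  ∃ ρ : Y → ℝ≥0∞, IsExtNorm ρ ∧ (∀ y, ρ y < ⊤) ∧ t = elcsTopology {ρ}

/-- `Y` has countable (algebraic) dimension over `ℝ`. -/
def HasCountableDim (Y : Type*) [AddCommGroup Y] [Module ℝ Y] : Prop :=
  ∃ s : Set Y, s.Countable ∧ Submodule.span ℝ s = ⊤

/-- The Minkowski functional of a set, with values in `[0,∞]` (`inf ∅ = ∞`). -/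
noncomputable def minkowskiE (U : Set X) : X → ℝ≥0∞ :=
  fun x => sInf (ENNReal.ofReal '' {r : ℝ | 0 < r ∧ x ∈ r • U})

end ElcsDefs

section FunctionSpaces

variable {Y : Type*} [TopologicalSpace Y]

/-- The subspace of continuous functions that are bounded on `B`. -/
def boundedOnSubmodule (B : Set Y) : Submodule ℝ C(Y, ℝ) where
  carrier := {f | ∃ M : ℝ, ∀ x ∈ B, |f x| ≤ M}
  add_mem' := by
    rintro f g ⟨M, hM⟩ ⟨N, hN⟩
    exact ⟨M + N, fun x hx => (abs_add_le _ _).trans (add_le_add (hM x hx) (hN x hx))⟩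
  zero_mem' := ⟨0, by simp⟩
  smul_mem' := by
    rintro c f ⟨M, hM⟩
    refine ⟨|c| * M, fun x hx => ?_⟩
    simp only [ContinuousMap.smul_apply, smul_eq_mul, abs_mul]
    exact mul_le_mul_of_nonneg_left (hM x hx) (abs_nonneg c)

/-- The sup extended seminorm `ρ_B` on `C(Y, ℝ)` associated to `B ⊆ Y`. -/
noncomputable def supExtSeminorm (B : Set Y) : C(Y, ℝ) → ℝ≥0∞ :=
  fun f => ⨆ x ∈ B, ENNReal.ofReal |f x|

end FunctionSpaces

/-!
If `ρ` is finite, every `f` in the dual ball satisfies `|f x| ≤ ρ x + 1`, so the ball sits, via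
`f ↦ (f x)ₓ`, as a closed subset of a product of compact intervals (Tychonoff); conversely a
functional that vanishes on `X_fin` but not at some `x₀` kills the unit ball, so all of its
multiples lie in the dual ball, and their values at `x₀` are unbounded.
-/

open Topology

lemma isOpen_elcsTopology_ball {X : Type*} [AddCommGroup X] {ρ : X → ℝ≥0∞} (c : X) {ε : ℝ≥0∞}
    (hε : 0 < ε) : IsOpen[elcsTopology {ρ}] {x | ρ (x - c) < ε} :=
  TopologicalSpace.GenerateOpen.basic _ ⟨ρ, rfl, c, ε, hε, rfl⟩

section ExtNormedDual

variable {X : Type*} [AddCommGroup X] [Module ℝ X] {ρ : X → ℝ≥0∞}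

def dualUnitBall (ρ : X → ℝ≥0∞) (t : TopologicalSpace X) : Set ↥(dualSubmodule t) :=
  {f | ∀ x : X, ρ x ≤ 1 → |f.1 x| ≤ 1}

lemma IsExtSeminorm.abs_le_of_le_ofReal (hρ : IsExtSeminorm ρ) {f : X →ₗ[ℝ] ℝ}
    (hf : ∀ x, ρ x ≤ 1 → |f x| ≤ 1) {x : X} {ε : ℝ} (hε : 0 < ε)
    (hx : ρ x ≤ ENNReal.ofReal ε) : |f x| ≤ ε := by
  have hε' : 0 < ε⁻¹ := inv_pos.2 hε
  have hscaled : ρ (ε⁻¹ • x) ≤ 1 := by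
    rw [hρ.1, abs_of_pos hε']
    calc ENNReal.ofReal ε⁻¹ * ρ x ≤ ENNReal.ofReal ε⁻¹ * ENNReal.ofReal ε := by gcongr
      _ = 1 := by rw [← ENNReal.ofReal_mul hε'.le, inv_mul_cancel₀ hε.ne', ENNReal.ofReal_one]
  have := hf _ hscaled
  rw [map_smul, smul_eq_mul, abs_mul, abs_of_pos hε', inv_mul_le_iff₀ hε, mul_one] at this
  exact this

lemma IsExtSeminorm.continuous_of_unitBall (hρ : IsExtSeminorm ρ) {f : X →ₗ[ℝ] ℝ}
    (hf : ∀ x, ρ x ≤ 1 → |f x| ≤ 1) : Continuous[elcsTopology {ρ}, _] f := by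
  let : TopologicalSpace X := elcsTopology {ρ}
  refine continuous_def.2 fun U hU => isOpen_iff_forall_mem_open.2 fun x₀ hx₀ => ?_
  obtain ⟨ε, hε, hball⟩ := Metric.isOpen_iff.1 hU _ hx₀
  have hε2 : 0 < ENNReal.ofReal (ε / 2) := ENNReal.ofReal_pos.2 (by linarith)
  refine ⟨{x | ρ (x - x₀) < ENNReal.ofReal (ε / 2)}, fun x hx => ?_,
    isOpen_elcsTopology_ball x₀ hε2, by simpa [hρ.map_zero] using hε2⟩
  have hclose := hρ.abs_le_of_le_ofReal hf (by linarith) (le_of_lt hx)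
  apply hball
  rw [Metric.mem_ball, Real.dist_eq, ← map_sub]
  linarith

lemma isInducing_weakStarTopology (t : TopologicalSpace X) :
    @IsInducing _ _ (weakStarTopology t) _ fun (f : ↥(dualSubmodule t)) (x : X) => f.1 x := by
  let := weakStarTopology t
  refine ⟨?_⟩
  rw [Pi.topologicalSpace, induced_iInf]
  simp only [induced_compose]
  rfl

lemma image_dualUnitBall (hρ : IsExtSeminorm ρ) :
    (fun (f : ↥(dualSubmodule (elcsTopology {ρ}))) (x : X) => f.1 x) ''
        dualUnitBall ρ (elcsTopology {ρ}) =
      Set.range ((↑) : (X →ₗ[ℝ] ℝ) → X → ℝ) ∩ {g | ∀ x, ρ x ≤ 1 → |g x| ≤ 1} := by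
  refine Set.Subset.antisymm ?_ ?_
  · rintro _ ⟨f, hf, rfl⟩
    exact ⟨⟨f.1, rfl⟩, hf⟩
  · rintro _ ⟨⟨f, rfl⟩, hf⟩
    exact ⟨⟨f, hρ.continuous_of_unitBall hf⟩, hf, rfl⟩

lemma isCompact_dualUnitBall (hρ : IsExtSeminorm ρ) (hfin : ∀ x, ρ x < ⊤) :
    @IsCompact _ (weakStarTopology _) (dualUnitBall ρ (elcsTopology {ρ})) := by
  let := weakStarTopology (elcsTopology {ρ})
  rw [(isInducing_weakStarTopology _).isCompact_iff, image_dualUnitBall hρ]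
  set r : X → ℝ := fun x => (ρ x).toReal + 1
  have hclosed : IsClosed {g : X → ℝ | ∀ x, ρ x ≤ 1 → |g x| ≤ 1} := by
    simp only [Set.ofPred_forall]
    exact isClosed_iInter fun x => isClosed_iInter fun _ =>
      isClosed_le (continuous_abs.comp (continuous_apply x)) continuous_const
  refine (isCompact_Icc (a := -r) (b := r)).of_isClosed_subset
    ((LinearMap.isClosed_range_coe _ _ _).inter hclosed) ?_
  rintro _ ⟨⟨f, rfl⟩, hf⟩
  have hbound : ∀ x, |f x| ≤ r x := fun x =>
    hρ.abs_le_of_le_ofReal hf (by positivity) <| by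
      rw [← ENNReal.ofReal_toReal (hfin x).ne]
      exact ENNReal.ofReal_le_ofReal (by simp [r])
  exact ⟨fun x => neg_le_of_abs_le (hbound x), fun x => le_of_abs_le (hbound x)⟩

lemma finSubmodule_eq_top_of_isCompact (hρ : IsExtSeminorm ρ)
    (hK : @IsCompact _ (weakStarTopology _) (dualUnitBall ρ (elcsTopology {ρ}))) :
    finSubmodule hρ = ⊤ := by
  let := weakStarTopology (elcsTopology {ρ})
  by_contra hne
  obtain ⟨x₀, -, hx₀⟩ := SetLike.exists_of_lt (lt_top_iff_ne_top.2 hne)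
  obtain ⟨f, hfx₀, hker⟩ := Submodule.exists_le_ker_of_notMem hx₀
  obtain ⟨C, hC⟩ := hK.exists_bound_of_continuousOn
    ((continuous_apply x₀).comp (isInducing_weakStarTopology _).continuous).continuousOn
  have hball : ∀ c : ℝ, ∀ x, ρ x ≤ 1 → |(c • f) x| ≤ 1 := fun c x hx => by
    have hfx : f x = 0 := hker (show ρ x < ⊤ from hx.trans_lt ENNReal.one_lt_top)
    simp [hfx]
  have hlarge := hC ⟨_, hρ.continuous_of_unitBall (hball ((|C| + 1) / f x₀))⟩ (hball _)
  simp only [Function.comp_apply, LinearMap.smul_apply, smul_eq_mul, div_mul_cancel₀ _ hfx₀,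
    Real.norm_eq_abs] at hlarge
  linarith [le_abs_self C, le_abs_self (|C| + 1)]

end ExtNormedDual

/-- the closed unit ball of the dual of an enls is weak* compact iff
`X = X_fin`, i.e. the extended norm is a norm. -/
theorem stmt17 {X : Type*} [AddCommGroup X] [Module ℝ X]
    (ρ : X → ℝ≥0∞) (hρ : IsExtNorm ρ)
    (t : TopologicalSpace X) (ht : t = elcsTopology {ρ}) :
    @IsCompact ↥(dualSubmodule t) (weakStarTopology t)
        {f : ↥(dualSubmodule t) | ∀ x : X, ρ x ≤ 1 → |f.1 x| ≤ 1} ↔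
      finSubmodule hρ.1 = (⊤ : Submodule ℝ X) := by
  subst ht
  exact ⟨finSubmodule_eq_top_of_isCompact hρ.1,
    fun h => isCompact_dualUnitBall hρ.1 (Submodule.eq_top_iff'.1 h)⟩
end

section
/- Let (X, τ) be a fundamental elcs (i.e., X_fin = X_fin^ρ for some continuous extended seminorm ρ, equivalently X_fin is open) with X = X_fin ⊕ M. Then on X*, the topology τ_ucb of uniform convergence on τ-bounded subsets of X equals the strong topology τ_s of uniform convergence on τ_F-bounded subsets of X, where τ_F is the flc topology of (X, τ). In particular, this holds for every extended normed linear space. -/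
open scoped ENNReal Pointwise
open TopologicalSpace

/-!
Since `τ_F` is coarser than `τ`, every `τ`-bounded set is `τ_F`-bounded, which gives one
inclusion. Conversely let `B` be `τ_F`-bounded and `p` the projection onto `X_fin` along `M`.
A seminorm whose balls are `τ`-open defines a locally convex topology coarser than `τ`, hence
coarser than `τ_F`, so it is bounded on `B`. Applied to `ρ ∘ p` for the defining extended
seminorms `ρ` (finite on `X_fin`), this makes `p(B)` `τ`-bounded. Applied to `|φ ∘ (1 - p)|`,
which is locally constant because `X_fin` is open, it shows that every linear functional is
bounded on `(1 - p)(B)`; such a set lies in a bounded box `{∑ aᵢ vᵢ : |aᵢ| ≤ 1}` of a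
finite-dimensional subspace. Hence `sup_B |φ| ≤ sup_D |φ|` for every `φ`, where
`D = p(B) + {∑ ±vᵢ}` is `τ`-bounded.
-/

open Set Topology

section ElcsTopology

variable {X : Type*} [AddCommGroup X] {P : Set (X → ℝ≥0∞)}

theorem isOpen_elcsBall {ρ : X → ℝ≥0∞} (hρ : ρ ∈ P) (c : X) {ε : ℝ≥0∞} (hε : 0 < ε) :
    IsOpen[elcsTopology P] {x | ρ (x - c) < ε} :=
  .basic _ ⟨ρ, hρ, c, ε, hε, rfl⟩

theorem continuous_elcs_add_right (a : X) :
    Continuous[elcsTopology P, elcsTopology P] (· + a) := by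
  rw [elcsTopology, continuous_generateFrom_iff]
  rintro _ ⟨ρ, hρ, c, ε, hε, rfl⟩
  have : (· + a) ⁻¹' {x | ρ (x - c) < ε} = {x | ρ (x - (c - a)) < ε} := by
    ext x
    simp [sub_sub_eq_add_sub]
  exact this ▸ isOpen_elcsBall hρ (c - a) hε

end ElcsTopology

section FiniteDimensional

variable {Y : Type*} [AddCommGroup Y] [Module ℝ Y]

theorem finiteDimensional_span_of_forall_bddAbove {S : Set Y}
    (hS : ∀ φ : Y →ₗ[ℝ] ℝ, BddAbove ((fun y => |φ y|) '' S)) :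
    FiniteDimensional ℝ (Submodule.span ℝ S) := by
  by_contra hinf
  obtain ⟨b, hbS, hbspan, hb⟩ := exists_linearIndependent ℝ S
  have hb_inf : b.Infinite := fun hfin =>
    hinf (hbspan ▸ FiniteDimensional.span_of_finite ℝ hfin)
  let e : ℕ → Y := fun n => (Set.Infinite.natEmbedding b hb_inf n : Y)
  have he : e.Injective := Subtype.val_injective.comp (Set.Infinite.natEmbedding b hb_inf).injective
  have hb' : LinearIndepOn ℝ id b := hb
  let B := Module.Basis.extend hb'
  let φ : Y →ₗ[ℝ] ℝ := B.constr ℝ fun i => ((Function.invFun e (i : Y) : ℕ) : ℝ)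
  have hφ (n : ℕ) : φ (e n) = n := by
    have hn : e n ∈ hb'.extend (subset_univ b) :=
      hb'.subset_extend _ (Set.Infinite.natEmbedding b hb_inf n).2
    have h := B.constr_basis ℝ (fun i => ((Function.invFun e (i : Y) : ℕ) : ℝ)) ⟨e n, hn⟩
    rwa [Module.Basis.extend_apply_self, Function.leftInverse_invFun he n] at h
  obtain ⟨C, hC⟩ := hS φ
  obtain ⟨n, hn⟩ := exists_nat_gt C
  have := hC ⟨e n, hbS (Set.Infinite.natEmbedding b hb_inf n).2, rfl⟩
  simp only [hφ, Nat.abs_cast] at this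
  linarith

theorem exists_abs_le_sum_of_forall_bddAbove {S : Set Y}
    (hS : ∀ φ : Y →ₗ[ℝ] ℝ, BddAbove ((fun y => |φ y|) '' S)) :
    ∃ (k : ℕ) (v : Fin k → Y), ∀ φ : Y →ₗ[ℝ] ℝ, ∀ y ∈ S, |φ y| ≤ ∑ i, |φ (v i)| := by
  have := finiteDimensional_span_of_forall_bddAbove hS
  let b := Module.finBasis ℝ (Submodule.span ℝ S)
  choose c hc using fun i => LinearMap.exists_extend (b.coord i)
  choose C hC using fun i => hS (c i)
  refine ⟨_, fun i => C i • (b i : Y), fun φ y hy => ?_⟩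
  let y' : Submodule.span ℝ S := ⟨y, Submodule.subset_span hy⟩
  have hy_eq : y = ∑ i, b.repr y' i • (b i : Y) := by
    have h := congrArg Subtype.val (b.sum_repr y')
    simp only [Submodule.coe_sum, Submodule.coe_smul] at h
    exact h.symm
  have hcoord (i) : |b.repr y' i| ≤ |C i| := by
    have h : c i y = b.repr y' i := by simpa using LinearMap.congr_fun (hc i) y'
    exact h ▸ (hC i (mem_image_of_mem _ hy)).trans (le_abs_self _)
  calc |φ y| = |∑ i, b.repr y' i * φ (b i)| := by
        rw [hy_eq, map_sum]; simp only [map_smul, smul_eq_mul]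
    _ ≤ ∑ i, |b.repr y' i| * |φ (b i)| := by
        simpa only [abs_mul] using Finset.abs_sum_le_sum_abs (fun i => b.repr y' i * φ (b i)) _
    _ ≤ ∑ i, |C i| * |φ (b i)| :=
        Finset.sum_le_sum fun i _ => mul_le_mul_of_nonneg_right (hcoord i) (abs_nonneg _)
    _ = ∑ i, |φ (C i • (b i : Y))| := by simp only [map_smul, smul_eq_mul, abs_mul]

end FiniteDimensional

theorem exists_sign_abs_add_sum_abs {ι : Type*} [Fintype ι] (a : ℝ) (b : ι → ℝ) :
    ∃ ε : ι → ℝ, (∀ i, ε i = 1 ∨ ε i = -1) ∧ |a| + ∑ i, |b i| = |a + ∑ i, ε i * b i| := by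
  let s : ℝ → ℝ := fun r => if 0 ≤ r then 1 else -1
  have hs (r : ℝ) : s r * r = |r| := by
    by_cases hr : 0 ≤ r
    · simp [s, hr, abs_of_nonneg hr]
    · simp [s, hr, abs_of_neg (not_le.1 hr)]
  have hs_sq (r : ℝ) : s r * s r = 1 := by by_cases hr : 0 ≤ r <;> simp [s, hr]
  have hs_abs (r : ℝ) : |s r| = 1 := by by_cases hr : 0 ≤ r <;> simp [s, hr]
  refine ⟨fun i => s a * s (b i), fun i => ?_, ?_⟩
  · by_cases ha : 0 ≤ a <;> by_cases hb : 0 ≤ b i <;> simp [s, ha, hb]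
  · have key : a + ∑ i, s a * s (b i) * b i = s a * (|a| + ∑ i, |b i|) := by
      rw [mul_add, Finset.mul_sum, ← hs a, ← mul_assoc, hs_sq, one_mul]
      congr 1
      refine Finset.sum_congr rfl fun i _ => ?_
      rw [← hs (b i)]
      ring
    beta_reduce
    rw [key, abs_mul, hs_abs, one_mul, abs_of_nonneg (by positivity : 0 ≤ |a| + ∑ i, |b i|)]

section Elcs

variable {X : Type*} [AddCommGroup X] [Module ℝ X] {P : Set (X → ℝ≥0∞)} {W M : Submodule ℝ X}

theorem IsExtSeminorm.map_neg {ρ : X → ℝ≥0∞} (hρ : IsExtSeminorm ρ) (x : X) : ρ (-x) = ρ x := by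
  simpa using hρ.1 (-1) x

theorem IsExtSeminorm.le_add_sub {ρ : X → ℝ≥0∞} (hρ : IsExtSeminorm ρ) (x y : X) :
    ρ y ≤ ρ x + ρ (y - x) := by
  simpa using hρ.2 x (y - x)

noncomputable def IsExtSeminorm.toSeminormOn {ρ : X → ℝ≥0∞} (hρ : IsExtSeminorm ρ)
    (W : Submodule ℝ X) (hW : ∀ w ∈ W, ρ w ≠ ⊤) : Seminorm ℝ W :=
  Seminorm.of (fun w => (ρ w).toReal)
    (fun v w => (ENNReal.toReal_mono (ENNReal.add_ne_top.2 ⟨hW v v.2, hW w w.2⟩)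
      (hρ.2 v w)).trans_eq (ENNReal.toReal_add (hW v v.2) (hW w w.2)))
    (fun a w => by simp [hρ.1, ENNReal.toReal_mul])

theorem elcsBall_mem_nhds (hP : ∀ ρ ∈ P, IsExtSeminorm ρ) {ρ : X → ℝ≥0∞} (hρ : ρ ∈ P) (x : X)
    {ε : ℝ≥0∞} (hε : 0 < ε) : {y | ρ (y - x) < ε} ∈ @nhds X (elcsTopology P) x :=
  @IsOpen.mem_nhds X (elcsTopology P) _ _ (isOpen_elcsBall hρ x hε)
    (by simpa [(hP ρ hρ).map_zero] using hε)

theorem continuous_of_mem_elcs (hP : ∀ ρ ∈ P, IsExtSeminorm ρ) {ρ : X → ℝ≥0∞} (hρ : ρ ∈ P) :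
    Continuous[elcsTopology P, _] ρ := by
  let := elcsTopology P
  have hsem := hP ρ hρ
  refine continuous_iff_lower_upperSemicontinuous.2 ⟨fun x a ha => ?_, fun x a ha => ?_⟩
  · filter_upwards [elcsBall_mem_nhds hP hρ x (tsub_pos_of_lt ha)] with y hy
    rw [lt_tsub_iff_left] at hy
    by_contra! hya
    have := hsem.le_add_sub y x
    rw [← neg_sub, hsem.map_neg] at this
    exact (this.trans (add_le_add_left hya _)).not_gt hy
  · filter_upwards [elcsBall_mem_nhds hP hρ x (tsub_pos_of_lt ha)] with y hy
    rw [lt_tsub_iff_left] at hy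
    exact (hsem.le_add_sub x y).trans_lt hy

theorem lt_top_of_mem_XfinSubmodule (hP : ∀ ρ ∈ P, IsExtSeminorm ρ) {ρ : X → ℝ≥0∞} (hρ : ρ ∈ P)
    {x : X} (hx : x ∈ XfinSubmodule (elcsTopology P)) : ρ x < ⊤ :=
  hx ρ (hP ρ hρ) (continuous_of_mem_elcs hP hρ)

theorem eventually_sub_mem_of_isOpen (hW : IsOpen[elcsTopology P] (W : Set X)) (x : X) :
    ∀ᶠ y in @nhds X (elcsTopology P) x, y - x ∈ W := by
  let := elcsTopology P
  have : (· + -x) ⁻¹' (W : Set X) ∈ 𝓝 x :=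
    (continuous_elcs_add_right (-x)).continuousAt.preimage_mem_nhds (hW.mem_nhds (by simp))
  filter_upwards [this] with y hy
  simpa [sub_eq_add_neg] using hy

theorem isLocallyConstant_of_le_ker {Y : Type*} [AddCommGroup Y] [Module ℝ Y]
    (hW : IsOpen[elcsTopology P] (W : Set X)) (L : X →ₗ[ℝ] Y) (hL : W ≤ LinearMap.ker L) :
    @IsLocallyConstant X Y (elcsTopology P) L := by
  let := elcsTopology P
  refine (IsLocallyConstant.iff_eventually_eq _).2 fun x => ?_
  filter_upwards [eventually_sub_mem_of_isOpen hW x] with y hy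
  rw [← sub_eq_zero, ← map_sub]
  exact hL hy

theorem continuous_of_eq_self_on (hW : IsOpen[elcsTopology P] (W : Set X)) (p : X →ₗ[ℝ] X)
    (hp : ∀ w ∈ W, p w = w) : Continuous[elcsTopology P, elcsTopology P] p := by
  let := elcsTopology P
  refine continuous_iff_continuousAt.2 fun x => ?_
  refine (continuous_elcs_add_right (p x - x)).continuousAt.congr ?_
  filter_upwards [eventually_sub_mem_of_isOpen hW x] with y hy
  have h := hp _ hy
  rw [map_sub, ← sub_eq_zero] at h
  rw [eq_comm, ← sub_eq_zero, ← h]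
  abel

theorem ElcsBounded.mono {t t' : TopologicalSpace X} (h : t ≤ t') {A : Set X}
    (hA : ElcsBounded t A) : ElcsBounded t' A :=
  fun U hU => hA U (nhds_mono h hU)

theorem ElcsBounded.add_finite {t : TopologicalSpace X} {A E : Set X} (hA : ElcsBounded t A)
    (hE : E.Finite) : ElcsBounded t (A + E) := by
  intro U hU
  obtain ⟨r, hr, F, hF, hFA, hAF⟩ := hA U hU
  refine ⟨r, hr, F + E, hF.add hE, add_subset_add_right hFA, ?_⟩
  calc A + E ⊆ F + r • U + E := add_subset_add_right hAF
    _ = F + E + r • U := add_right_comm _ _ _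

theorem exists_elcsBall_subset_of_isOpen
    (hP : ∀ ρ ∈ P, IsExtSeminorm ρ) {V : Set X} (hV : IsOpen[elcsTopology P] V) {x : X}
    (hx : x ∈ V) :
    ∃ s : Finset (X → ℝ≥0∞), ↑s ⊆ P ∧ ∃ δ > 0, {y | ∀ ρ ∈ s, ρ (y - x) < δ} ⊆ V := by
  classical
  induction hV generalizing x with
  | basic u hu =>
    obtain ⟨ρ, hρ, c, ε, -, rfl⟩ := hu
    refine ⟨{ρ}, by simpa using hρ, ε - ρ (x - c), tsub_pos_of_lt hx, fun y hy => ?_⟩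
    have hy : ρ (y - x) + ρ (x - c) < ε := lt_tsub_iff_right.1 (by simpa using hy)
    calc ρ (y - c) = ρ (y - x + (x - c)) := by rw [sub_add_sub_cancel]
      _ ≤ ρ (y - x) + ρ (x - c) := (hP ρ hρ).2 _ _
      _ < ε := hy
  | univ => exact ⟨∅, by simp, 1, one_pos, subset_univ _⟩
  | inter u v _ _ ihu ihv =>
    obtain ⟨s, hs, δ, hδ, hsu⟩ := ihu hx.1
    obtain ⟨s', hs', δ', hδ', hsv⟩ := ihv hx.2
    refine ⟨s ∪ s', by simp [hs, hs'], min δ δ', lt_min hδ hδ', fun y hy => ⟨?_, ?_⟩⟩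
    · exact hsu fun ρ hρ => (hy ρ (Finset.mem_union_left _ hρ)).trans_le (min_le_left _ _)
    · exact hsv fun ρ hρ => (hy ρ (Finset.mem_union_right _ hρ)).trans_le (min_le_right _ _)
  | sUnion S _ ih =>
    obtain ⟨u, hu, hxu⟩ := hx
    obtain ⟨s, hs, δ, hδ, hsu⟩ := ih u hu hxu
    exact ⟨s, hs, δ, hδ, hsu.trans (subset_sUnion_of_mem hu)⟩

theorem elcsBounded_of_forall_le (hP : ∀ ρ ∈ P, IsExtSeminorm ρ)
    {A : Set X} (hA : ∀ ρ ∈ P, ∃ C ≠ ⊤, ∀ a ∈ A, ρ a ≤ C) :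
    ElcsBounded (elcsTopology P) A := by
  intro U hU
  rcases A.eq_empty_or_nonempty with rfl | ⟨x₀, hx₀⟩
  · exact ⟨1, one_pos, ∅, finite_empty, subset_rfl, empty_subset _⟩
  let := elcsTopology P
  obtain ⟨V, hVU, hV, h0V⟩ := mem_nhds_iff.1 hU
  obtain ⟨s, hsP, δ, hδ, hsV⟩ := exists_elcsBall_subset_of_isOpen hP hV h0V
  choose! C hCtop hC using hA
  have hsum : ∑ ρ ∈ s, 2 * C ρ ≠ ⊤ :=
    ENNReal.sum_ne_top.2 fun ρ hρ => ENNReal.mul_ne_top (by norm_num) (hCtop ρ (hsP hρ))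
  obtain ⟨n, hn⟩ := ENNReal.exists_nat_mul_gt hδ.ne' hsum
  have hn0 : (0 : ℝ) < n := Nat.cast_pos.2 <| Nat.pos_of_ne_zero <| by rintro rfl; simp at hn
  refine ⟨n, hn0, {x₀}, finite_singleton _, singleton_subset_iff.2 hx₀, fun a ha => ?_⟩
  refine ⟨x₀, rfl, (n : ℝ) • ((n : ℝ)⁻¹ • (a - x₀)), smul_mem_smul_set (hVU (hsV fun ρ hρ => ?_)),
    by simp [smul_smul, hn0.ne']⟩
  have hρ_le : ρ (a - x₀) ≤ ∑ ρ ∈ s, 2 * C ρ :=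
    calc ρ (a - x₀) ≤ ρ a + ρ x₀ := by
          simpa [sub_eq_add_neg, (hP ρ (hsP hρ)).map_neg] using (hP ρ (hsP hρ)).2 a (-x₀)
      _ ≤ 2 * C ρ := by rw [two_mul]; exact add_le_add (hC ρ (hsP hρ) a ha) (hC ρ (hsP hρ) x₀ hx₀)
      _ ≤ ∑ ρ ∈ s, 2 * C ρ := Finset.single_le_sum (f := fun ρ => 2 * C ρ) (fun _ _ => zero_le) hρ
  have hn_inv : ENNReal.ofReal |(n : ℝ)⁻¹| = (n : ℝ≥0∞)⁻¹ := by
    rw [abs_inv, Nat.abs_cast, ENNReal.ofReal_inv_of_pos hn0, ENNReal.ofReal_natCast]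
  rw [sub_zero, (hP ρ (hsP hρ)).1, hn_inv, ← ENNReal.div_eq_inv_mul]
  exact ENNReal.div_lt_of_lt_mul' (hρ_le.trans_lt hn)

theorem Seminorm.bddAbove_image_of_elcsBounded {t : TopologicalSpace X} (q : Seminorm ℝ X)
    (hq : q.ball 0 1 ∈ @nhds X t 0) {A : Set X} (hA : ElcsBounded t A) : BddAbove (q '' A) := by
  obtain ⟨r, hr, F, hF, -, hAF⟩ := hA _ hq
  obtain ⟨C, hC⟩ := (hF.image q).bddAbove
  refine ⟨C + r, ?_⟩
  rintro _ ⟨_, hx, rfl⟩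
  obtain ⟨f, hf, _, ⟨u, hu, rfl⟩, rfl⟩ := hAF hx
  rw [Seminorm.mem_ball_zero] at hu
  calc q (f + r • u) ≤ q f + |r| * q u := by
        simpa only [map_smul_eq_mul, Real.norm_eq_abs] using map_add_le_add q f (r • u)
    _ ≤ C + r := by
        rw [abs_of_pos hr]
        exact add_le_add (hC (mem_image_of_mem q hf)) (mul_le_of_le_one_right hr.le hu.le)

def IsContSeminormBounded (t : TopologicalSpace X) (A : Set X) : Prop :=
  ∀ q : Seminorm ℝ X, (∀ (c : X) (r : ℝ), 0 < r → IsOpen[t] (q.ball c r)) → BddAbove (q '' A)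

theorem ElcsBounded.isContSeminormBounded {t tF : TopologicalSpace X} (hF : IsFlcTopology t tF)
    {A : Set X} (hA : ElcsBounded tF A) : IsContSeminormBounded t A := by
  intro q hq
  let p : SeminormFamily ℝ X Unit := fun _ => q
  let tq : TopologicalSpace X := p.moduleFilterBasis.topology
  have hp : WithSeminorms p := ⟨rfl⟩
  have htq : t ≤ tq := by
    refine TopologicalSpace.le_def.2 fun U hU => ?_
    refine @isOpen_iff_forall_mem_open X t U |>.2 fun x hx => ?_
    obtain ⟨s, r, hr, hsU⟩ := (hp.isOpen_iff_mem_balls U).1 hU x hx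
    exact ⟨q.ball x r, (Seminorm.ball_antitone (Finset.sup_le fun _ _ => le_rfl)).trans hsU,
      hq x r hr, q.mem_ball_self hr⟩
  have hFq : tF ≤ tq :=
    hF.2.2.2.2 tq htq hp.topologicalAddGroup hp.continuousSMul hp.toLocallyConvexSpace
  exact q.bddAbove_image_of_elcsBounded
    (nhds_mono hFq (q.ball_mem_nhds (hp.continuous_seminorm ()) one_pos)) hA

noncomputable def supAbsOn (B : Set X) (φ : X →ₗ[ℝ] ℝ) : ℝ≥0∞ :=
  ⨆ x ∈ B, ENNReal.ofReal |φ x|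

theorem supAbsOn_zero (B : Set X) : supAbsOn B 0 = 0 := by
  simp [supAbsOn]

theorem le_supAbsOn {B : Set X} {x : X} (hx : x ∈ B) (φ : X →ₗ[ℝ] ℝ) :
    ENNReal.ofReal |φ x| ≤ supAbsOn B φ :=
  le_iSup₂ (f := fun x (_ : x ∈ B) => ENNReal.ofReal |φ x|) x hx

theorem supAbsOn_add_le (B : Set X) (φ ψ : X →ₗ[ℝ] ℝ) :
    supAbsOn B (φ + ψ) ≤ supAbsOn B φ + supAbsOn B ψ :=
  iSup₂_le fun _ hx => (ENNReal.ofReal_le_ofReal (abs_add_le _ _)).trans <|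
    ENNReal.ofReal_add_le.trans <| add_le_add (le_supAbsOn hx φ) (le_supAbsOn hx ψ)

theorem ucTopology_le_of_forall_exists_supAbsOn_le {t : TopologicalSpace X}
    {𝔅 𝔅' : Set (Set X)}
    (h : ∀ B ∈ 𝔅', ∃ D ∈ 𝔅, ∀ φ : X →ₗ[ℝ] ℝ, supAbsOn B φ ≤ supAbsOn D φ) :
    ucTopology t 𝔅 ≤ ucTopology t 𝔅' := by
  let := ucTopology t 𝔅
  refine le_generateFrom ?_
  rintro _ ⟨B, hB, g, ε, -, rfl⟩
  obtain ⟨D, hD, hBD⟩ := h B hB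
  refine isOpen_iff_forall_mem_open.2 fun f₀ (hf₀ : supAbsOn B (f₀.1 - g.1) < ε) => ?_
  have hδ : 0 < ε - supAbsOn B (f₀.1 - g.1) := tsub_pos_of_lt hf₀
  refine ⟨{f | supAbsOn D (f.1 - f₀.1) < ε - supAbsOn B (f₀.1 - g.1)}, fun f hf => ?_,
    .basic _ ⟨D, hD, f₀, _, hδ, rfl⟩, by simpa [supAbsOn_zero] using hδ⟩
  show supAbsOn B (f.1 - g.1) < ε
  calc supAbsOn B (f.1 - g.1) ≤ supAbsOn B (f.1 - f₀.1) + supAbsOn B (f₀.1 - g.1) := by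
        simpa using supAbsOn_add_le B (f.1 - f₀.1) (f₀.1 - g.1)
    _ ≤ supAbsOn D (f.1 - f₀.1) + supAbsOn B (f₀.1 - g.1) := add_le_add_left (hBD _) _
    _ < ε := lt_tsub_iff_right.1 hf

theorem elcsBounded_image_projection (hP : ∀ ρ ∈ P, IsExtSeminorm ρ)
    (hW : IsOpen[elcsTopology P] (W : Set X))
    (hW_fin : ∀ ρ ∈ P, ∀ w ∈ W, ρ w ≠ ⊤) (hM : IsCompl W M) {B : Set X}
    (hB : IsContSeminormBounded (elcsTopology P) B) :
    ElcsBounded (elcsTopology P) (W.projection M hM '' B) := by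
  let := elcsTopology P
  set p := W.projection M hM
  have hp : Continuous[elcsTopology P, elcsTopology P] p :=
    continuous_of_eq_self_on hW p fun w hw => W.projection_apply_of_mem_left hM hw
  refine elcsBounded_of_forall_le hP fun ρ hρ => ?_
  have hρ_fin (x : X) : ρ (p x) ≠ ⊤ := hW_fin ρ hρ _ (W.projection_apply_mem hM x)
  let q := ((hP ρ hρ).toSeminormOn W (hW_fin ρ hρ)).comp (W.projectionOnto M hM)
  have hq_apply (x : X) : q x = (ρ (p x)).toReal := rfl
  have hq (c : X) (r : ℝ) (hr : 0 < r) : IsOpen[elcsTopology P] (q.ball c r) := by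
    have : q.ball c r = p ⁻¹' {z | ρ (z - p c) < ENNReal.ofReal r} := by
      ext x
      rw [Seminorm.mem_ball, hq_apply, mem_preimage, mem_ofPred_eq, ← map_sub]
      exact (ENNReal.lt_ofReal_iff_toReal_lt (hρ_fin _)).symm
    exact this ▸ (isOpen_elcsBall hρ _ (ENNReal.ofReal_pos.2 hr)).preimage hp
  obtain ⟨C, hC⟩ := hB q hq
  refine ⟨ENNReal.ofReal C, ENNReal.ofReal_ne_top, ?_⟩
  rintro _ ⟨x, hx, rfl⟩
  rw [← ENNReal.ofReal_toReal (hρ_fin x)]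
  exact ENNReal.ofReal_le_ofReal (hC (mem_image_of_mem q hx))

theorem bddAbove_abs_image_sub_projection
    (hW : IsOpen[elcsTopology P] (W : Set X)) (hM : IsCompl W M) {B : Set X}
    (hB : IsContSeminormBounded (elcsTopology P) B) (φ : X →ₗ[ℝ] ℝ) :
    BddAbove ((fun y => |φ y|) '' ((fun x => x - W.projection M hM x) '' B)) := by
  set Q : X →ₗ[ℝ] X := LinearMap.id - W.projection M hM
  have hQ : @IsLocallyConstant X X (elcsTopology P) Q :=
    isLocallyConstant_of_le_ker hW Q fun w hw => by
      simp [Q, W.projection_apply_of_mem_left hM hw]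
  let q := (normSeminorm ℝ ℝ).comp (φ ∘ₗ Q)
  have hq (c : X) (r : ℝ) (_ : 0 < r) : IsOpen[elcsTopology P] (q.ball c r) := by
    have : q.ball c r = Q ⁻¹' {z | ‖φ z - φ (Q c)‖ < r} := by
      ext x
      simp [q, Seminorm.mem_ball, map_sub]
    exact this ▸ hQ _
  obtain ⟨C, hC⟩ := hB q hq
  refine ⟨C, ?_⟩
  rintro _ ⟨_, ⟨x, hx, rfl⟩, rfl⟩
  exact hC ⟨x, hx, rfl⟩

theorem exists_elcsBounded_supAbsOn_le (hP : ∀ ρ ∈ P, IsExtSeminorm ρ)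
    (hW : IsOpen[elcsTopology P] (W : Set X))
    (hW_fin : ∀ ρ ∈ P, ∀ w ∈ W, ρ w ≠ ⊤) (hM : IsCompl W M) {B : Set X}
    (hB : IsContSeminormBounded (elcsTopology P) B) :
    ∃ D, ElcsBounded (elcsTopology P) D ∧ ∀ φ : X →ₗ[ℝ] ℝ, supAbsOn B φ ≤ supAbsOn D φ := by
  set p := W.projection M hM
  obtain ⟨k, v, hv⟩ :=
    exists_abs_le_sum_of_forall_bddAbove (bddAbove_abs_image_sub_projection hW hM hB)
  let E := (fun ε : Fin k → ℝ => ∑ i, ε i • v i) '' univ.pi fun _ => {1, -1}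
  have hE : E.Finite := (Set.Finite.pi fun _ => toFinite _).image _
  refine ⟨p '' B + E, (elcsBounded_image_projection hP hW hW_fin hM hB).add_finite hE,
    fun φ => iSup₂_le fun x hx => ?_⟩
  obtain ⟨ε, hε, hε_sum⟩ := exists_sign_abs_add_sum_abs (φ (p x)) fun i => φ (v i)
  have hx_le : |φ x| ≤ |φ (p x + ∑ i, ε i • v i)| :=
    calc |φ x| = |φ (p x) + φ (x - p x)| := by rw [← map_add, add_sub_cancel]
      _ ≤ |φ (p x)| + |φ (x - p x)| := abs_add_le _ _
      _ ≤ |φ (p x)| + ∑ i, |φ (v i)| := add_le_add_right (hv φ _ ⟨x, hx, rfl⟩) _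
      _ = |φ (p x + ∑ i, ε i • v i)| := by simp [hε_sum, map_sum]
  refine (ENNReal.ofReal_le_ofReal hx_le).trans (le_supAbsOn ?_ φ)
  exact add_mem_add (mem_image_of_mem p hx) ⟨ε, fun i _ => by simpa using hε i, rfl⟩

end Elcs

/-- for a fundamental elcs with `X = X_fin ⊕ M`, the topology of uniform
convergence on `τ`-bounded sets equals that of uniform convergence on `τ_F`-bounded sets. -/
theorem stmt19 {X : Type*} [AddCommGroup X] [Module ℝ X]
    (t tF : TopologicalSpace X) (P : Set (X → ℝ≥0∞)) (hP : IsELCS t P)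
    (hF : IsFlcTopology t tF)
    (hfund : ∃ ρ : X → ℝ≥0∞, IsExtSeminorm ρ ∧ @Continuous X ℝ≥0∞ t _ ρ ∧
      (XfinSubmodule t : Set X) = {x | ρ x < ⊤})
    (M : Submodule ℝ X) (hM : IsCompl (XfinSubmodule t) M) :
    ucTopology t {B : Set X | ElcsBounded t B} =
      ucTopology t {B : Set X | ElcsBounded tF B} := by
  obtain ⟨hP, rfl⟩ := hP
  obtain ⟨ρ, -, hρ, hXfin⟩ := hfund
  have hXfin_open : IsOpen[elcsTopology P] (XfinSubmodule (elcsTopology P) : Set X) :=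
    hXfin ▸ @IsOpen.preimage X ℝ≥0∞ (elcsTopology P) _ ρ hρ _ isOpen_Iio
  refine le_antisymm (ucTopology_le_of_forall_exists_supAbsOn_le fun B hB => ?_)
    (ucTopology_le_of_forall_exists_supAbsOn_le fun B hB => ⟨B, hB.mono hF.1, fun _ => le_rfl⟩)
  exact exists_elcsBounded_supAbsOn_le hP hXfin_open
    (fun σ hσ w hw => (lt_top_of_mem_XfinSubmodule hP hσ hw).ne) hM
    (hB.isContSeminormBounded hF)
end
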